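/- For every d̄ ≥ 1 and every ε > 0 with 1000ε ≤ 1/d̄ there exists n₀ ∈ ℕ such that the following holds for every n ≥ n₀. Let D be a feasible degree sequence on V = [n] with Σ^D ≤ d̄n, set T := {u ∈ V : d(u) ≤ 3d̄}, S₂ := {u ∈ V : d(u) ≥ n^{1/3}} and S₃ := {u ∈ V : d(u) ≥ n^{4/5}}, and assume Σ_{u∈S₃} d(u) ≥ εn/10. Then P[ |N_{G^D}(S₂) ∩ T| ≤ ε²n ] ≤ 1/n. -/

import Mathlib

open Finset

noncomputable section
open scoped Classical

/-- The finset of all simple graphs on `Fin n` realising the degree sequence `D`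
(vertex `v` has degree `D v`). -/
def graphsWithDegreeSeq (n : ℕ) (D : Fin n → ℕ) : Finset (SimpleGraph (Fin n)) :=
  Finset.univ.filter (fun G => ∀ v, G.degree v = D v)

/-- Probability of `A` under the uniform distribution on simple graphs with degree
sequence `D`. -/
def uniformProb (n : ℕ) (D : Fin n → ℕ) (A : SimpleGraph (Fin n) → Prop) : ℝ :=
  (((graphsWithDegreeSeq n D).filter A).card : ℝ) / ((graphsWithDegreeSeq n D).card : ℝ)

/-!
Let `C j` be the set of graphs with degree sequence `D` in which `|N(S₂) ∩ T| ≤ j`. Switching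
the edges `vw`, `xy` to `vx`, `wy`, with `v ∈ S₃`, `w ∉ T`, `x ∈ T ∖ N(S₂)` and `y ∉ N[w]`,
preserves degrees and adds at most `x, y` to `N(S₂) ∩ T`, so it maps `C j` into `C (j + 2)`.
A graph in `C j` admits at least `(εn/10 - 3d̄j)(2n/3 - j) - 2d̄²n^{23/15} ≥ 3εn²/100`
switchings: the edges from `S₃` into `T` end in `N(S₂) ∩ T`, so there are at most `3d̄j` of
them, and the `x ∈ T ∖ N(S₂)` have neighbours of degree `< n^{1/3}` only. Conversely a graph in
`C (j + 2)` arises from at most `(j + 2) Σ^D ≤ 3εn²/1000` switchings, since `x ∈ N(S₂) ∩ T`,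
its unique neighbour in `S₂` and the oriented edge `wy` determine one. Hence
`10 |C j| ≤ |C (j + 2)|` for `j ≤ 2ε²n`, and iterating `⌊ε²n⌋ / 2` times from `j = ⌊ε²n⌋`
bounds the probability by `10^{-⌊ε²n⌋/2} ≤ 1/n`.
-/

namespace SimpleGraph

variable {V : Type*} (G : SimpleGraph V)

def switch (v w x y : V) : SimpleGraph V :=
  G.deleteEdges {s(v, w), s(x, y)} ⊔ edge v x ⊔ edge w y

structure IsSwitchable (v w x y : V) : Prop where
  adj_vw : G.Adj v w
  adj_xy : G.Adj x y
  not_adj_vx : ¬ G.Adj v x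
  not_adj_wy : ¬ G.Adj w y
  ne_vx : v ≠ x
  ne_wy : w ≠ y

variable {G}

lemma switch_adj {v w x y a b : V} :
    (G.switch v w x y).Adj a b ↔
      G.Adj a b ∧ ¬(a = v ∧ b = w ∨ a = w ∧ b = v) ∧ ¬(a = x ∧ b = y ∨ a = y ∧ b = x) ∨
        (a = v ∧ b = x ∨ a = x ∧ b = v) ∧ a ≠ b ∨ (a = w ∧ b = y ∨ a = y ∧ b = w) ∧ a ≠ b := by
  simp only [switch, sup_adj, deleteEdges_adj, edge_adj, Set.mem_insert_iff,
    Set.mem_singleton_iff, Sym2.eq_iff, not_or, or_assoc, and_assoc]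

lemma switch_swap (v w x y : V) : G.switch v w x y = G.switch w v y x := by
  rw [switch, switch, Sym2.eq_swap (a := w), Sym2.eq_swap (a := y), sup_right_comm]

lemma switch_comm (v w x y : V) : G.switch v w x y = G.switch x y v w := by
  rw [switch, switch, Set.pair_comm, edge_comm x, edge_comm y]

namespace IsSwitchable

variable {v w x y : V} (h : G.IsSwitchable v w x y)
include h

lemma ne_vy : v ≠ y := by
  rintro rfl; exact h.not_adj_vx h.adj_xy.symm

lemma ne_wx : w ≠ x := by
  rintro rfl; exact h.not_adj_vx h.adj_vw

lemma swap : G.IsSwitchable w v y x :=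
  ⟨h.adj_vw.symm, h.adj_xy.symm, h.not_adj_wy, h.not_adj_vx, h.ne_wy, h.ne_vx⟩

lemma comm : G.IsSwitchable x y v w :=
  ⟨h.adj_xy, h.adj_vw, fun h' => h.not_adj_vx h'.symm, fun h' => h.not_adj_wy h'.symm,
    h.ne_vx.symm, h.ne_wy.symm⟩

lemma switch_switch : (G.switch v w x y).switch v x w y = G := by
  have := h.ne_vy; have := h.ne_wx
  obtain ⟨_, _, _, _, _, _⟩ := h
  ext a b
  simp only [switch_adj]
  grind [adj_comm, ne_of_adj]

variable [Fintype V]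

lemma neighborFinset_switch :
    (G.switch v w x y).neighborFinset v = insert x ((G.neighborFinset v).erase w) := by
  have := h.ne_vy; have := h.ne_wx
  obtain ⟨_, _, _, _, _, _⟩ := h
  ext b
  simp only [mem_neighborFinset, switch_adj, Finset.mem_insert, Finset.mem_erase]
  grind [adj_comm, ne_of_adj]

lemma degree_switch_left : (G.switch v w x y).degree v = G.degree v := by
  rw [← card_neighborFinset_eq_degree, ← card_neighborFinset_eq_degree,
    h.neighborFinset_switch, Finset.card_insert_of_notMem, Finset.card_erase_add_one]
  · exact (mem_neighborFinset _ _ _).2 h.adj_vw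
  · simpa using fun _ => h.not_adj_vx

omit h in
lemma neighborFinset_switch_of_ne {a : V} (hv : a ≠ v) (hw : a ≠ w) (hx : a ≠ x) (hy : a ≠ y) :
    (G.switch v w x y).neighborFinset a = G.neighborFinset a := by
  ext b
  simp only [mem_neighborFinset, switch_adj]
  grind [ne_of_adj]

lemma degree_switch (a : V) : (G.switch v w x y).degree a = G.degree a := by
  by_cases hv : a = v
  · exact hv ▸ h.degree_switch_left
  by_cases hw : a = w
  · rw [hw, switch_swap]; exact h.swap.degree_switch_left
  by_cases hx : a = x
  · rw [hx, switch_comm]; exact h.comm.degree_switch_left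
  by_cases hy : a = y
  · rw [hy, switch_swap, switch_comm]; exact h.swap.comm.degree_switch_left
  rw [← card_neighborFinset_eq_degree, ← card_neighborFinset_eq_degree,
    neighborFinset_switch_of_ne hv hw hx hy]

end IsSwitchable
end SimpleGraph

namespace Finset

lemma card_mul_le_card_mul_of_injOn_sigma {ι κ β : Type*} {A : Finset ι} {B : Finset κ}
    {Q : ι → Finset β} {R : κ → Finset β} {L U : ℝ} (f : ι → β → κ)
    (hQ : ∀ i ∈ A, L ≤ #(Q i)) (hR : ∀ k ∈ B, #(R k) ≤ U)
    (hf : ∀ i ∈ A, ∀ q ∈ Q i, f i q ∈ B ∧ q ∈ R (f i q))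
    (hinj : ∀ i₁ ∈ A, ∀ i₂ ∈ A, ∀ q ∈ Q i₁, q ∈ Q i₂ → f i₁ q = f i₂ q → i₁ = i₂) :
    #A * L ≤ #B * U := by
  have hsum : ∑ i ∈ A, #(Q i) ≤ ∑ k ∈ B, #(R k) := by
    rw [← card_sigma, ← card_sigma]
    refine card_le_card_of_injOn (fun p => ⟨f p.1 p.2, p.2⟩) (fun p hp => ?_)
      fun p hp p' hp' he => ?_
    · simp only [coe_sigma, Set.mem_sigma_iff, mem_coe] at hp ⊢
      exact hf _ hp.1 _ hp.2
    · simp only [coe_sigma, Set.mem_sigma_iff, mem_coe, Sigma.mk.inj_iff] at hp hp' he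
      obtain ⟨hfe, hq⟩ := he
      have hq : p.2 = p'.2 := eq_of_heq hq
      exact Sigma.ext (hinj _ hp.1 _ hp'.1 _ hp.2 (hq ▸ hp'.2) (hq ▸ hfe)) (heq_of_eq hq)
  calc #A * L = ∑ _i ∈ A, L := by rw [sum_const, nsmul_eq_mul]
    _ ≤ ∑ i ∈ A, (#(Q i) : ℝ) := sum_le_sum hQ
    _ ≤ ∑ k ∈ B, (#(R k) : ℝ) := by exact_mod_cast hsum
    _ ≤ ∑ _k ∈ B, U := sum_le_sum hR
    _ = #B * U := by rw [sum_const, nsmul_eq_mul]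

lemma card_filter_mul_le_sum {ι : Type*} {s : Finset ι} {f : ι → ℝ} {c : ℝ} (p : ι → Prop)
    [DecidablePred p] (hf : ∀ i ∈ s, 0 ≤ f i) (hp : ∀ i ∈ s, p i → c ≤ f i) :
    #(s.filter p) * c ≤ ∑ i ∈ s, f i := by
  calc #(s.filter p) * c = ∑ _i ∈ s.filter p, c := by rw [sum_const, nsmul_eq_mul]
    _ ≤ ∑ i ∈ s.filter p, f i := sum_le_sum fun i hi => hp i (mem_filter.1 hi).1 (mem_filter.1 hi).2
    _ ≤ ∑ i ∈ s, f i := sum_le_sum_of_subset_of_nonneg (filter_subset _ _) fun i hi _ => hf i hi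

end Finset

namespace SimpleGraph

variable {V : Type*} [Fintype V] (G : SimpleGraph V)

def dartsFrom (s : Finset V) : Finset (V × V) :=
  univ.filter fun p => p.1 ∈ s ∧ G.Adj p.1 p.2

variable {G}

@[simp]
lemma mem_dartsFrom {s : Finset V} {p : V × V} : p ∈ G.dartsFrom s ↔ p.1 ∈ s ∧ G.Adj p.1 p.2 := by
  simp [dartsFrom]

lemma card_dartsFrom (s : Finset V) : #(G.dartsFrom s) = ∑ v ∈ s, G.degree v := by
  rw [card_eq_sum_card_fiberwise (f := Prod.fst) (t := s) fun p hp => (mem_dartsFrom.1 hp).1]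
  refine sum_congr rfl fun v hv => ?_
  rw [← card_neighborFinset_eq_degree]
  refine card_nbij' Prod.snd (fun w => (v, w)) ?_ ?_ ?_ ?_
  all_goals
    intro p hp
    simp only [coe_filter, mem_dartsFrom, Set.mem_ofPred_eq, coe_neighborFinset,
      mem_neighborSet, and_true] at hp ⊢
  · exact hp.2 ▸ hp.1.2
  · exact ⟨hv, hp⟩
  · exact Prod.ext hp.2.symm rfl

lemma card_le_card_dartsFrom {s : Finset V} (h : ∀ v ∈ s, 1 ≤ G.degree v) :
    #s ≤ #(G.dartsFrom s) := by
  rw [card_dartsFrom, card_eq_sum_ones]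
  exact sum_le_sum h

end SimpleGraph

section Counting

open SimpleGraph

variable {V : Type*} [Fintype V] (D : V → ℕ) (t a b : ℝ) (G : SimpleGraph V)

/- For `t = 3d̄`, `a = n^{1/3}`, `b = n^{4/5}`: `highDeg D b = S₃`, `hubNbrs = (N(S₂) ∩ T) ∖ S₂`
and `hubFree = T ∖ N(S₂)`. A pair `((v, w), (x, y))` stands for switching `vw, xy` to `vx, wy`. -/

def highDeg : Finset V :=
  univ.filter fun v => b ≤ (D v : ℝ)

def hubNbrs : Finset V :=
  univ.filter fun w => (D w : ℝ) ≤ t ∧ ¬ a ≤ (D w : ℝ) ∧ ∃ v, a ≤ (D v : ℝ) ∧ G.Adj v w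

def hubFree : Finset V :=
  univ.filter fun x => (D x : ℝ) ≤ t ∧ ∀ u, a ≤ (D u : ℝ) → ¬ G.Adj u x

def bigHubEdges : Finset (V × V) :=
  (G.dartsFrom (highDeg D b)).filter fun p => ¬ (D p.2 : ℝ) ≤ t

def forwardSwitchings : Finset ((V × V) × (V × V)) :=
  (bigHubEdges D t b G ×ˢ G.dartsFrom (hubFree D t a G)).filter
    fun e => ¬ (e.2.2 = e.1.2 ∨ G.Adj e.1.2 e.2.2)

def backwardSwitchings : Finset ((V × V) × (V × V)) :=
  univ.filter fun e => e.2.1 ∈ hubNbrs D t a G ∧ a ≤ (D e.1.1 : ℝ) ∧ G.Adj e.1.1 e.2.1 ∧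
    (∀ u, a ≤ (D u : ℝ) → G.Adj u e.2.1 → u = e.1.1) ∧ G.Adj e.1.2 e.2.2

variable {D t a b G}

lemma sum_highDeg_sub_le_card_bigHubEdges (hG : ∀ v, G.degree v = D v) (hta : t < a)
    (hab : a ≤ b) :
    ∑ v ∈ highDeg D b, (D v : ℝ) - t * #(hubNbrs D t a G) ≤ #(bigHubEdges D t b G) := by
  have hsplit := card_filter_add_card_filter_not
    (s := G.dartsFrom (highDeg D b)) fun p => (D p.2 : ℝ) ≤ t
  have hlow : #((G.dartsFrom (highDeg D b)).filter fun p => (D p.2 : ℝ) ≤ t) ≤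
      #(G.dartsFrom (hubNbrs D t a G)) := by
    refine card_le_card_of_injOn Prod.swap (fun p hp => ?_) (Prod.swap_injective.injOn)
    simp only [coe_filter, mem_dartsFrom, highDeg, hubNbrs, mem_filter, mem_univ, true_and,
      Set.mem_ofPred_eq, mem_coe, Prod.fst_swap, Prod.snd_swap] at hp ⊢
    exact ⟨⟨hp.2, hta.not_ge ∘ (·.trans hp.2), p.1, hab.trans hp.1.1, hp.1.2⟩, hp.1.2.symm⟩
  have hW : (#(G.dartsFrom (hubNbrs D t a G)) : ℝ) ≤ t * #(hubNbrs D t a G) := by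
    rw [card_dartsFrom, mul_comm, ← nsmul_eq_mul]
    push_cast
    exact sum_le_card_nsmul _ _ _ fun w hw => hG w ▸ (mem_filter.1 hw).2.1
  have hS : (#(G.dartsFrom (highDeg D b)) : ℝ) = ∑ v ∈ highDeg D b, (D v : ℝ) := by
    rw [card_dartsFrom]
    push_cast
    exact sum_congr rfl fun v _ => by rw [hG]
  rw [← hS, ← hsplit, bigHubEdges]
  push_cast
  linarith [(Nat.cast_le (α := ℝ)).2 hlow]

lemma card_sub_sum_div_le_card_hubFree_add (ht : 0 < t) (hta : t < a) :
    (Fintype.card V : ℝ) - (∑ v, (D v : ℝ)) / t ≤ #(hubFree D t a G) + #(hubNbrs D t a G) := by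
  have hsplit := card_filter_add_card_filter_not (s := univ) fun v => (D v : ℝ) ≤ t
  have hhigh := card_filter_mul_le_sum (s := univ) (f := fun v => (D v : ℝ)) (c := t)
    (fun v => ¬ (D v : ℝ) ≤ t) (fun _ _ => by positivity) fun _ _ h => (not_le.1 h).le
  have hlow : univ.filter (fun v => (D v : ℝ) ≤ t) ⊆ hubFree D t a G ∪ hubNbrs D t a G := by
    intro w hw
    simp only [hubFree, hubNbrs, mem_union, mem_filter, mem_univ, true_and] at hw ⊢
    by_cases hx : ∀ u, a ≤ (D u : ℝ) → ¬ G.Adj u w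
    · exact Or.inl ⟨hw, hx⟩
    · push Not at hx
      exact Or.inr ⟨hw, hta.not_ge ∘ (·.trans hw), hx⟩
  have hcard : (#(univ.filter fun v => (D v : ℝ) ≤ t) : ℝ) ≤
      #(hubFree D t a G) + #(hubNbrs D t a G) := by
    exact_mod_cast (card_le_card hlow).trans (card_union_le _ _)
  have hsplit' : (Fintype.card V : ℝ) = #(univ.filter fun v => (D v : ℝ) ≤ t) +
      #(univ.filter fun v => ¬ (D v : ℝ) ≤ t) := by
    rw [card_univ] at hsplit; exact_mod_cast hsplit.symm
  linarith [(le_div_iff₀ ht).2 hhigh]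

lemma card_dartsFrom_hubFree_filter_snd_eq_le (hG : ∀ v, G.degree v = D v) (ha : 0 ≤ a) (y : V) :
    (#((G.dartsFrom (hubFree D t a G)).filter fun q => q.2 = y) : ℝ) ≤ a := by
  rcases ((G.dartsFrom (hubFree D t a G)).filter fun q => q.2 = y).eq_empty_or_nonempty
    with hemp | ⟨⟨x, y'⟩, hq⟩
  · simpa [hemp] using ha
  simp only [mem_filter, mem_dartsFrom, hubFree, mem_univ, true_and] at hq
  obtain ⟨⟨⟨-, hx⟩, hxy⟩, rfl⟩ := hq
  have hlt : (D y' : ℝ) < a := not_le.1 fun h => hx y' h hxy.symm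
  have hinj : #((G.dartsFrom (hubFree D t a G)).filter fun q => q.2 = y') ≤ G.degree y' := by
    rw [← card_neighborFinset_eq_degree]
    refine card_le_card_of_injOn Prod.fst (fun q hq => ?_) fun q hq q' hq' h => ?_
    · simp only [coe_filter, mem_dartsFrom, Set.mem_ofPred_eq, mem_coe, mem_neighborFinset] at hq ⊢
      exact hq.2 ▸ hq.1.2.symm
    · simp only [coe_filter, mem_dartsFrom, Set.mem_ofPred_eq] at hq hq'
      exact Prod.ext h (hq.2.trans hq'.2.symm)
  rw [hG] at hinj
  exact ((Nat.cast_le.2 hinj).trans hlt.le)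

lemma card_dartsFrom_hubFree_filter_snd_near_le (hG : ∀ v, G.degree v = D v) (ha : 0 ≤ a) (w : V) :
    (#((G.dartsFrom (hubFree D t a G)).filter fun q => q.2 = w ∨ G.Adj w q.2) : ℝ) ≤
      a * (D w + 1) := by
  rw [card_eq_sum_card_fiberwise (f := Prod.snd) (t := insert w (G.neighborFinset w))
    fun q hq => by simpa using (mem_filter.1 hq).2]
  push_cast
  calc _ ≤ ∑ _y ∈ insert w (G.neighborFinset w), a := sum_le_sum fun y _ =>
        (Nat.cast_le.2 (card_le_card (filter_subset_filter _ (filter_subset _ _)))).trans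
          (card_dartsFrom_hubFree_filter_snd_eq_le hG ha y)
    _ ≤ a * (D w + 1) := by
      rw [sum_const, nsmul_eq_mul, mul_comm, ← hG, ← card_neighborFinset_eq_degree]
      gcongr
      exact_mod_cast card_insert_le _ _

lemma card_bad_switchings_le (hG : ∀ v, G.degree v = D v) (ha : 0 ≤ a) :
    (#((bigHubEdges D t b G ×ˢ G.dartsFrom (hubFree D t a G)).filter
        fun e => e.2.2 = e.1.2 ∨ G.Adj e.1.2 e.2.2) : ℝ) ≤
      a * #(highDeg D b) * (∑ v, (D v : ℝ) + Fintype.card V) := by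
  rw [card_eq_sum_card_fiberwise (f := Prod.fst) (t := bigHubEdges D t b G)
    fun e he => (mem_product.1 (mem_filter.1 he).1).1]
  push_cast
  calc _ ≤ ∑ p ∈ bigHubEdges D t b G, a * ((D p.2 : ℝ) + 1) := sum_le_sum fun p _ => by
        refine le_trans (Nat.cast_le.2 ?_)
          (card_dartsFrom_hubFree_filter_snd_near_le (t := t) hG ha p.2)
        refine card_le_card_of_injOn Prod.snd (fun e he => ?_) fun e he e' he' h => ?_
        · simp only [coe_filter, mem_filter, mem_product, Set.mem_ofPred_eq] at he ⊢
          exact ⟨he.1.1.2, he.2 ▸ he.1.2⟩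
        · simp only [coe_filter, mem_filter, Set.mem_ofPred_eq] at he he'
          exact Prod.ext (he.2.trans he'.2.symm) h
    _ ≤ ∑ p ∈ highDeg D b ×ˢ univ, a * ((D p.2 : ℝ) + 1) := by
      refine sum_le_sum_of_subset_of_nonneg (fun p hp => ?_) fun _ _ _ => by positivity
      simp only [bigHubEdges, mem_filter, mem_dartsFrom] at hp
      exact mem_product.2 ⟨hp.1.1, mem_univ _⟩
    _ = a * #(highDeg D b) * (∑ v, (D v : ℝ) + Fintype.card V) := by
      rw [sum_product]
      simp only [← mul_sum, sum_add_distrib, sum_const, card_univ, nsmul_eq_mul, mul_one]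
      ring

lemma card_mul_sub_le_card_forwardSwitchings (hG : ∀ v, G.degree v = D v) (ha : 0 ≤ a) :
    (#(bigHubEdges D t b G) * #(G.dartsFrom (hubFree D t a G)) : ℝ) -
        a * #(highDeg D b) * (∑ v, (D v : ℝ) + Fintype.card V) ≤
      #(forwardSwitchings D t a b G) := by
  have hsplit := card_filter_add_card_filter_not
    (s := bigHubEdges D t b G ×ˢ G.dartsFrom (hubFree D t a G))
    fun e => e.2.2 = e.1.2 ∨ G.Adj e.1.2 e.2.2
  rw [card_product] at hsplit
  have hsplit' : ((#(bigHubEdges D t b G) * #(G.dartsFrom (hubFree D t a G)) : ℕ) : ℝ) = _ :=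
    congrArg (Nat.cast (R := ℝ)) hsplit.symm
  push_cast at hsplit'
  rw [hsplit', forwardSwitchings]
  linarith [card_bad_switchings_le (t := t) hG ha (b := b) (G := G)]

lemma mem_forwardSwitchings {v w x y : V} :
    ((v, w), (x, y)) ∈ forwardSwitchings D t a b G ↔
      (b ≤ (D v : ℝ) ∧ G.Adj v w ∧ ¬ (D w : ℝ) ≤ t) ∧
        (((D x : ℝ) ≤ t ∧ ∀ u, a ≤ (D u : ℝ) → ¬ G.Adj u x) ∧ G.Adj x y) ∧
          y ≠ w ∧ ¬ G.Adj w y := by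
  simp [forwardSwitchings, bigHubEdges, highDeg, hubFree, and_assoc]

variable {v w x y : V}

lemma isSwitchable_of_mem_forwardSwitchings (hta : t < a) (hab : a ≤ b)
    (he : ((v, w), (x, y)) ∈ forwardSwitchings D t a b G) : G.IsSwitchable v w x y := by
  obtain ⟨⟨hv, hvw, -⟩, ⟨⟨hx, hfree⟩, hxy⟩, hyw, hwy⟩ := mem_forwardSwitchings.1 he
  refine ⟨hvw, hxy, hfree v (hab.trans hv), hwy, ?_, hyw.symm⟩
  rintro rfl
  linarith

lemma card_hubNbrs_switch_le (hab : a ≤ b) (he : ((v, w), (x, y)) ∈ forwardSwitchings D t a b G) :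
    #(hubNbrs D t a (G.switch v w x y)) ≤ #(hubNbrs D t a G) + 2 := by
  obtain ⟨⟨hv, -, hw⟩, -, -, -⟩ := mem_forwardSwitchings.1 he
  have hsub : hubNbrs D t a (G.switch v w x y) ⊆ insert x (insert y (hubNbrs D t a G)) := by
    intro u hu
    simp only [hubNbrs, mem_filter, mem_univ, true_and, mem_insert, switch_adj] at hu ⊢
    obtain ⟨huT, huS, v', hv', hadj⟩ := hu
    have : u ≠ v := by rintro rfl; exact huS (hab.trans hv)
    have : u ≠ w := by rintro rfl; exact hw huT
    grind
  calc _ ≤ #(insert x (insert y (hubNbrs D t a G))) := card_le_card hsub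
    _ ≤ #(hubNbrs D t a G) + 2 := (card_insert_le _ _).trans (by simp [card_insert_le])

lemma mem_backwardSwitchings_switch (hta : t < a) (hab : a ≤ b)
    (he : ((v, w), (x, y)) ∈ forwardSwitchings D t a b G) :
    ((v, w), (x, y)) ∈ backwardSwitchings D t a (G.switch v w x y) := by
  have h := isSwitchable_of_mem_forwardSwitchings hta hab he
  obtain ⟨⟨hv, -, -⟩, ⟨⟨hx, hfree⟩, hxy⟩, -, -⟩ := mem_forwardSwitchings.1 he
  have hvx : (G.switch v w x y).Adj v x :=
    switch_adj.2 (Or.inr (Or.inl ⟨Or.inl ⟨rfl, rfl⟩, h.ne_vx⟩))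
  simp only [backwardSwitchings, hubNbrs, mem_filter, mem_univ, true_and]
  refine ⟨⟨hx, fun h' => hta.not_ge (h'.trans hx), v, hab.trans hv, hvx⟩, hab.trans hv, hvx,
    fun u hu hux => ?_, switch_adj.2 (Or.inr (Or.inr ⟨Or.inl ⟨rfl, rfl⟩, h.ne_wy⟩))⟩
  have := hfree u hu; have := h.ne_wx; have := hxy.ne
  rw [switch_adj] at hux
  grind

lemma card_backwardSwitchings_le_mul (hG : ∀ v, G.degree v = D v) :
    #(backwardSwitchings D t a G) ≤ #(hubNbrs D t a G) * ∑ v, D v := by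
  calc #(backwardSwitchings D t a G) ≤ #(hubNbrs D t a G ×ˢ G.dartsFrom univ) := by
        refine card_le_card_of_injOn (fun e => (e.2.1, e.1.2, e.2.2)) (fun e he => ?_)
          fun e he e' he' h => ?_
        · simp only [backwardSwitchings, coe_filter, mem_univ, true_and, Set.mem_ofPred_eq,
            mem_coe, mem_product, mem_dartsFrom] at he ⊢
          exact ⟨he.1, he.2.2.2.2⟩
        · simp only [backwardSwitchings, coe_filter, mem_univ, true_and,
            Set.mem_ofPred_eq, Prod.mk.injEq] at he he' h
          obtain ⟨hx, hw, hy⟩ := h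
          have hv := he.2.2.2.1 e'.1.1 he'.2.1 (hx ▸ he'.2.2.1)
          exact Prod.ext (Prod.ext hv.symm hw) (Prod.ext hx hy)
    _ = #(hubNbrs D t a G) * ∑ v, D v := by
      rw [card_product, card_dartsFrom]
      simp only [hG]

end Counting

section DegreeSequence

variable {n : ℕ} {D : Fin n → ℕ} {t a b : ℝ}

lemma mem_graphsWithDegreeSeq {G : SimpleGraph (Fin n)} :
    G ∈ graphsWithDegreeSeq n D ↔ ∀ v, G.degree v = D v := by
  simp [graphsWithDegreeSeq]

variable (n D t a) in
def fewHubNbrs (j : ℕ) : Finset (SimpleGraph (Fin n)) :=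
  (graphsWithDegreeSeq n D).filter fun G => #(hubNbrs D t a G) ≤ j

lemma card_fewHubNbrs_mul_le (hta : t < a) (hab : a ≤ b) {j : ℕ} {L U : ℝ}
    (hL : ∀ G ∈ fewHubNbrs n D t a j, L ≤ #(forwardSwitchings D t a b G))
    (hU : ∀ G ∈ fewHubNbrs n D t a (j + 2), #(backwardSwitchings D t a G) ≤ U) :
    #(fewHubNbrs n D t a j) * L ≤ #(fewHubNbrs n D t a (j + 2)) * U := by
  refine card_mul_le_card_mul_of_injOn_sigma (fun G e => G.switch e.1.1 e.1.2 e.2.1 e.2.2) hL hU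
    ?_ ?_
  · rintro G hG ⟨⟨v, w⟩, x, y⟩ he
    obtain ⟨hGD, hGj⟩ := mem_filter.1 hG
    refine ⟨mem_filter.2 ⟨mem_graphsWithDegreeSeq.2 fun u => ?_, ?_⟩,
      mem_backwardSwitchings_switch hta hab he⟩
    · exact ((isSwitchable_of_mem_forwardSwitchings hta hab he).degree_switch u).trans
        (mem_graphsWithDegreeSeq.1 hGD u)
    · exact (card_hubNbrs_switch_le hab he).trans (by omega)
  · rintro G₁ - G₂ - ⟨⟨v, w⟩, x, y⟩ he₁ he₂ h
    rw [← (isSwitchable_of_mem_forwardSwitchings hta hab he₁).switch_switch,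
      ← (isSwitchable_of_mem_forwardSwitchings hta hab he₂).switch_switch]
    exact congrArg (·.switch v x w y) h

end DegreeSequence

section Asymptotics

open Filter

structure IsLarge (dbar ε : ℝ) (n : ℕ) : Prop where
  three_mul_lt : 3 * dbar < (n : ℝ) ^ ((1 : ℝ) / 3)
  hub_bound : 200 * dbar ^ 2 * (n : ℝ) ^ ((1 : ℝ) / 3) ≤ ε * (n : ℝ) ^ ((4 : ℝ) / 5)
  linear_bound : 4000 * dbar ≤ ε * n
  quartic_bound : 64 ≤ ε ^ 4 * n

lemma eventually_isLarge {dbar ε : ℝ} (hε : 0 < ε) : ∀ᶠ n : ℕ in atTop, IsLarge dbar ε n := by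
  have hpow : ∀ {r : ℝ}, 0 < r → Tendsto (fun n : ℕ => (n : ℝ) ^ r) atTop atTop :=
    fun hr => (tendsto_rpow_atTop hr).comp tendsto_natCast_atTop_atTop
  filter_upwards [(hpow (r := 1 / 3) (by norm_num)).eventually_gt_atTop (3 * dbar),
    (hpow (r := 7 / 15) (by norm_num)).eventually_ge_atTop (200 * dbar ^ 2 / ε),
    tendsto_natCast_atTop_atTop.eventually_ge_atTop (4000 * dbar / ε),
    tendsto_natCast_atTop_atTop.eventually_ge_atTop (64 / ε ^ 4),
    eventually_gt_atTop 0] with n h₁ h₂ h₃ h₄ hn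
  have hn : (0 : ℝ) < n := Nat.cast_pos.2 hn
  rw [div_le_iff₀ hε] at h₂ h₃
  rw [div_le_iff₀ (by positivity)] at h₄
  refine ⟨h₁, ?_, by linarith, by linarith⟩
  have hsplit : (n : ℝ) ^ ((4 : ℝ) / 5) = (n : ℝ) ^ ((7 : ℝ) / 15) * (n : ℝ) ^ ((1 : ℝ) / 3) := by
    rw [← Real.rpow_add hn]; norm_num
  calc 200 * dbar ^ 2 * (n : ℝ) ^ ((1 : ℝ) / 3)
      ≤ (n : ℝ) ^ ((7 : ℝ) / 15) * ε * (n : ℝ) ^ ((1 : ℝ) / 3) := by gcongr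
    _ = ε * (n : ℝ) ^ ((4 : ℝ) / 5) := by rw [hsplit]; ring

namespace IsLarge

variable {dbar ε : ℝ} {n : ℕ} (hL : IsLarge dbar ε n) (hdbar : 1 ≤ dbar) (hε : 0 < ε)
  (hεd : ε * dbar ≤ 1 / 1000)
include hL hdbar hε

lemma natCast_pos : (0 : ℝ) < n := by
  by_contra h
  nlinarith [hL.linear_bound]

include hεd

lemma half_le_card_dartsFrom_hubFree {D : Fin n → ℕ} (hD1 : ∀ w, 1 ≤ D w)
    (hsum : ∑ i, (D i : ℝ) ≤ dbar * n) {G : SimpleGraph (Fin n)} (hG : ∀ v, G.degree v = D v)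
    {j : ℕ} (hW : #(hubNbrs D (3 * dbar) ((n : ℝ) ^ ((1 : ℝ) / 3)) G) ≤ j)
    (hj : (j : ℝ) ≤ 2 * ε ^ 2 * n) :
    (n : ℝ) / 2 ≤ #(G.dartsFrom (hubFree D (3 * dbar) ((n : ℝ) ^ ((1 : ℝ) / 3)) G)) := by
  set X := hubFree D (3 * dbar) ((n : ℝ) ^ ((1 : ℝ) / 3)) G
  have hN := hL.natCast_pos hdbar hε
  have hX := card_sub_sum_div_le_card_hubFree_add (D := D) (G := G) (by positivity)
    hL.three_mul_lt
  rw [Fintype.card_fin] at hX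
  have hEX : (#X : ℝ) ≤ #(G.dartsFrom X) := by
    exact_mod_cast SimpleGraph.card_le_card_dartsFrom fun v _ => hG v ▸ hD1 v
  have hT : (∑ v, (D v : ℝ)) / (3 * dbar) ≤ n / 3 := by
    rw [div_le_iff₀ (by positivity)]; nlinarith
  have hW' : (#(hubNbrs D (3 * dbar) ((n : ℝ) ^ ((1 : ℝ) / 3)) G) : ℝ) ≤ 2 * ε ^ 2 * n :=
    (Nat.cast_le.2 hW).trans hj
  have hε2 : ε ^ 2 * n ≤ n / 12 :=
    (mul_le_mul_of_nonneg_right (by nlinarith : ε ^ 2 ≤ 1 / 12) hN.le).trans_eq (by ring)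
  linarith

omit hεd in
lemma rpow_mul_card_highDeg_mul_le {D : Fin n → ℕ} (hsum : ∑ i, (D i : ℝ) ≤ dbar * n) :
    (n : ℝ) ^ ((1 : ℝ) / 3) * #(highDeg D ((n : ℝ) ^ ((4 : ℝ) / 5))) *
      (∑ v, (D v : ℝ) + Fintype.card (Fin n)) ≤ ε * n ^ 2 / 100 := by
  set N := (n : ℝ)
  set a := N ^ ((1 : ℝ) / 3)
  set b := N ^ ((4 : ℝ) / 5)
  have hN : 0 < N := hL.natCast_pos hdbar hε
  have hb : 0 < b := by positivity
  have hS := card_filter_mul_le_sum (s := univ) (f := fun v => (D v : ℝ)) (c := b)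
    (fun v => b ≤ (D v : ℝ)) (fun _ _ => by positivity) fun _ _ h => h
  rw [Fintype.card_fin]
  refine le_of_mul_le_mul_right ?_ hb
  calc a * #(highDeg D b) * (∑ v, (D v : ℝ) + N) * b
      = a * (#(highDeg D b) * b) * (∑ v, (D v : ℝ) + N) := by ring
    _ ≤ a * (dbar * N) * (2 * dbar * N) :=
        mul_le_mul (mul_le_mul_of_nonneg_left (hS.trans hsum) (by positivity)) (by nlinarith)
          (by positivity) (by positivity)
    _ = 200 * dbar ^ 2 * a * (N ^ 2 / 100) := by ring
    _ ≤ ε * b * (N ^ 2 / 100) := mul_le_mul_of_nonneg_right hL.hub_bound (by positivity)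
    _ = ε * N ^ 2 / 100 * b := by ring

lemma le_card_forwardSwitchings {D : Fin n → ℕ} (hD1 : ∀ w, 1 ≤ D w)
    (hsum : ∑ i, (D i : ℝ) ≤ dbar * n)
    (hS3 : ε * n / 10 ≤ ∑ u ∈ highDeg D ((n : ℝ) ^ ((4 : ℝ) / 5)), (D u : ℝ))
    {G : SimpleGraph (Fin n)} (hG : ∀ v, G.degree v = D v) {j : ℕ}
    (hW : #(hubNbrs D (3 * dbar) ((n : ℝ) ^ ((1 : ℝ) / 3)) G) ≤ j)
    (hj : (j : ℝ) ≤ 2 * ε ^ 2 * n) :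
    3 * ε * n ^ 2 / 100 ≤
      #(forwardSwitchings D (3 * dbar) ((n : ℝ) ^ ((1 : ℝ) / 3)) ((n : ℝ) ^ ((4 : ℝ) / 5)) G) := by
  have hN := hL.natCast_pos hdbar hε
  have hab : (n : ℝ) ^ ((1 : ℝ) / 3) ≤ (n : ℝ) ^ ((4 : ℝ) / 5) :=
    Real.rpow_le_rpow_of_exponent_le (Nat.one_le_cast.2 (Nat.cast_pos.1 hN)) (by norm_num)
  have hP : 2 * ε * n / 25 ≤ #(bigHubEdges D (3 * dbar) ((n : ℝ) ^ ((4 : ℝ) / 5)) G) := by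
    have := sum_highDeg_sub_le_card_bigHubEdges hG hL.three_mul_lt hab
    have := mul_le_mul_of_nonneg_left ((Nat.cast_le.2 hW).trans hj) (by positivity : 0 ≤ dbar)
    have := mul_le_mul_of_nonneg_right hεd (by positivity : (0 : ℝ) ≤ ε * n)
    nlinarith
  have hE := hL.half_le_card_dartsFrom_hubFree hdbar hε hεd hD1 hsum hG hW hj
  have hQ := card_mul_sub_le_card_forwardSwitchings (t := 3 * dbar)
    (b := (n : ℝ) ^ ((4 : ℝ) / 5)) hG (by positivity : (0 : ℝ) ≤ (n : ℝ) ^ ((1 : ℝ) / 3))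
  have := mul_le_mul hP hE (by positivity) (by positivity)
  linarith [hL.rpow_mul_card_highDeg_mul_le hdbar hε hsum]

lemma card_backwardSwitchings_le {D : Fin n → ℕ} (hsum : ∑ i, (D i : ℝ) ≤ dbar * n)
    {G : SimpleGraph (Fin n)} (hG : ∀ v, G.degree v = D v) {j : ℕ}
    (hW : #(hubNbrs D (3 * dbar) ((n : ℝ) ^ ((1 : ℝ) / 3)) G) ≤ j + 2)
    (hj : (j : ℝ) ≤ 2 * ε ^ 2 * n) :
    #(backwardSwitchings D (3 * dbar) ((n : ℝ) ^ ((1 : ℝ) / 3)) G) ≤ 3 * ε * n ^ 2 / 1000 := by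
  have hN := hL.natCast_pos hdbar hε
  have hR : (#(backwardSwitchings D (3 * dbar) ((n : ℝ) ^ ((1 : ℝ) / 3)) G) : ℝ) ≤
      #(hubNbrs D (3 * dbar) ((n : ℝ) ^ ((1 : ℝ) / 3)) G) * ∑ v, (D v : ℝ) := by
    exact_mod_cast card_backwardSwitchings_le_mul hG
  have hW' : (#(hubNbrs D (3 * dbar) ((n : ℝ) ^ ((1 : ℝ) / 3)) G) : ℝ) ≤ 2 * ε ^ 2 * n + 2 := by
    have : (#(hubNbrs D (3 * dbar) ((n : ℝ) ^ ((1 : ℝ) / 3)) G) : ℝ) ≤ j + 2 := by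
      exact_mod_cast hW
    linarith
  have := mul_le_mul hW' hsum (by positivity) (by positivity)
  have := mul_le_mul_of_nonneg_right hεd (by positivity : (0 : ℝ) ≤ 2 * ε * n ^ 2)
  have := mul_le_mul_of_nonneg_right hL.linear_bound (by positivity : (0 : ℝ) ≤ n)
  nlinarith

lemma ten_mul_card_fewHubNbrs_le {D : Fin n → ℕ} (hD1 : ∀ w, 1 ≤ D w)
    (hsum : ∑ i, (D i : ℝ) ≤ dbar * n)
    (hS3 : ε * n / 10 ≤ ∑ u ∈ highDeg D ((n : ℝ) ^ ((4 : ℝ) / 5)), (D u : ℝ))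
    {j : ℕ} (hj : (j : ℝ) ≤ 2 * ε ^ 2 * n) :
    10 * (#(fewHubNbrs n D (3 * dbar) ((n : ℝ) ^ ((1 : ℝ) / 3)) j) : ℝ) ≤
      #(fewHubNbrs n D (3 * dbar) ((n : ℝ) ^ ((1 : ℝ) / 3)) (j + 2)) := by
  have hN := hL.natCast_pos hdbar hε
  have key := card_fewHubNbrs_mul_le hL.three_mul_lt
    (Real.rpow_le_rpow_of_exponent_le (Nat.one_le_cast.2 (Nat.cast_pos.1 hN))
      (by norm_num : (1 : ℝ) / 3 ≤ 4 / 5))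
    (fun G hG => hL.le_card_forwardSwitchings hdbar hε hεd hD1 hsum hS3
      (mem_graphsWithDegreeSeq.1 (mem_filter.1 hG).1) (mem_filter.1 hG).2 hj)
    (fun G hG => hL.card_backwardSwitchings_le hdbar hε hεd hsum
      (mem_graphsWithDegreeSeq.1 (mem_filter.1 hG).1) (mem_filter.1 hG).2 hj)
  have hpos : (0 : ℝ) < 3 * ε * n ^ 2 / 1000 := by positivity
  nlinarith

lemma pow_mul_card_fewHubNbrs_floor_le {D : Fin n → ℕ} (hD1 : ∀ w, 1 ≤ D w)
    (hsum : ∑ i, (D i : ℝ) ≤ dbar * n)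
    (hS3 : ε * n / 10 ≤ ∑ u ∈ highDeg D ((n : ℝ) ^ ((4 : ℝ) / 5)), (D u : ℝ)) :
    10 ^ (⌊ε ^ 2 * n⌋₊ / 2) *
        (#(fewHubNbrs n D (3 * dbar) ((n : ℝ) ^ ((1 : ℝ) / 3)) ⌊ε ^ 2 * n⌋₊) : ℝ) ≤
      #(graphsWithDegreeSeq n D) := by
  set K := ⌊ε ^ 2 * n⌋₊
  have hK : (K : ℝ) ≤ ε ^ 2 * n := Nat.floor_le (by positivity)
  have hs : ((2 * (K / 2) : ℕ) : ℝ) ≤ K := Nat.cast_le.2 (Nat.mul_div_le K 2)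
  push_cast at hs
  have hchain := geom_le (u := fun i => (#(fewHubNbrs n D (3 * dbar) ((n : ℝ) ^ ((1 : ℝ) / 3))
    (K + 2 * i)) : ℝ)) (c := 10) (by norm_num) (K / 2) fun i hi => by
      have hi : (i : ℝ) + 1 ≤ (K / 2 : ℕ) := by exact_mod_cast hi
      simpa [mul_add, add_assoc] using hL.ten_mul_card_fewHubNbrs_le hdbar hε hεd hD1 hsum hS3
        (j := K + 2 * i) (by push_cast; linarith)
  simp only [mul_zero, add_zero] at hchain
  exact hchain.trans (by exact_mod_cast card_le_card (filter_subset _ _))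

lemma natCast_le_ten_pow : (n : ℝ) ≤ 10 ^ (⌊ε ^ 2 * n⌋₊ / 2) := by
  have hN := hL.natCast_pos hdbar hε
  set K := ⌊ε ^ 2 * n⌋₊
  have hε1 : ε ≤ 1 / 1000 := by nlinarith
  have hquad : 64 ≤ ε ^ 2 * n := by
    have h42 : ε ^ 4 ≤ ε ^ 2 := pow_le_pow_of_le_one hε.le (by linarith) (by norm_num)
    have := mul_le_mul_of_nonneg_right h42 hN.le
    linarith [hL.quartic_bound]
  have hK : ε ^ 2 * n - 1 < K := by linarith [Nat.lt_floor_add_one (ε ^ 2 * n)]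
  have hs : (K : ℝ) ≤ 2 * (K / 2 : ℕ) + 1 := by exact_mod_cast (by omega : K ≤ 2 * (K / 2) + 1)
  have hsq : (n : ℝ) ≤ (K / 2 : ℕ) * (K / 2 : ℕ) := by
    have h4 : ε ^ 2 * n / 4 ≤ (K / 2 : ℕ) := by linarith
    have := mul_le_mul h4 h4 (by positivity) (by positivity)
    nlinarith [hL.quartic_bound]
  have hpow : (K / 2) * (K / 2) ≤ 10 ^ (K / 2) :=
    calc (K / 2) * (K / 2) ≤ 2 * (K / 2) ^ 2 + 1 := by nlinarith
      _ ≤ 2 ^ (2 * (K / 2)) := Nat.two_mul_sq_add_one_le_two_pow_two_mul _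
      _ = 4 ^ (K / 2) := by rw [pow_mul]; norm_num
      _ ≤ 10 ^ (K / 2) := Nat.pow_le_pow_left (by norm_num) _
  exact hsq.trans (by exact_mod_cast hpow)

end IsLarge

/-- **Lemma (many low-degree vertices are neighbours of `S₂`).**
With `T = {u : d(u) ≤ 3d̄}`, `S₂ = {u : d(u) ≥ n^{1/3}}`, `S₃ = {u : d(u) ≥ n^{4/5}}`
and `Σ_{u∈S₃} d(u) ≥ εn`, the probability that `|N(S₂) ∩ T| ≤ ε²n` is at most `1/n`. -/
theorem many_T_vertices_in_NS2 :
    ∀ dbar : ℝ, 1 ≤ dbar → ∀ ε : ℝ, 0 < ε → 1000 * ε ≤ 1 / dbar →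
    ∃ n₀ : ℕ, ∀ n : ℕ, n₀ ≤ n →
    ∀ D : Fin n → ℕ, (∀ w, 1 ≤ D w) →
    (graphsWithDegreeSeq n D).Nonempty →
    (∑ i, (D i : ℝ)) ≤ dbar * n →
    ε * n / 10 ≤ (∑ u ∈ Finset.univ.filter
        (fun u : Fin n => (n : ℝ) ^ ((4 : ℝ) / 5) ≤ (D u : ℝ)), (D u : ℝ)) →
    uniformProb n D (fun G =>
        ((Finset.univ.filter (fun w : Fin n =>
            (D w : ℝ) ≤ 3 * dbar ∧
            ¬ (n : ℝ) ^ ((1 : ℝ) / 3) ≤ (D w : ℝ) ∧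
            ∃ v : Fin n, (n : ℝ) ^ ((1 : ℝ) / 3) ≤ (D v : ℝ) ∧ G.Adj v w)).card : ℝ)
          ≤ ε ^ 2 * n)
      ≤ 1 / n := by
  intro dbar hdbar ε hε hεd
  have hεd : ε * dbar ≤ 1 / 1000 := by
    rw [le_div_iff₀ (by positivity)] at hεd; linarith
  obtain ⟨n₀, hn₀⟩ := Filter.eventually_atTop.1 (eventually_isLarge (dbar := dbar) hε)
  refine ⟨n₀, fun n hn D hD1 hΩ hsum hS3 => ?_⟩
  have hL := hn₀ n hn
  have hΩ : (0 : ℝ) < #(graphsWithDegreeSeq n D) := by exact_mod_cast hΩ.card_pos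
  rw [uniformProb, div_le_iff₀ hΩ]
  calc _ ≤ (#(fewHubNbrs n D (3 * dbar) ((n : ℝ) ^ ((1 : ℝ) / 3)) ⌊ε ^ 2 * n⌋₊) : ℝ) := by
        refine Nat.cast_le.2 (card_le_card fun G hG => ?_)
        have hW : (#(hubNbrs D (3 * dbar) ((n : ℝ) ^ ((1 : ℝ) / 3)) G) : ℝ) ≤ ε ^ 2 * n := by
          -- the event's filter carries a different `Decidable` instance than `hubNbrs`
          unfold hubNbrs
          convert (mem_filter.1 hG).2
        exact mem_filter.2 ⟨(mem_filter.1 hG).1, Nat.le_floor hW⟩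
    _ ≤ #(graphsWithDegreeSeq n D) / 10 ^ (⌊ε ^ 2 * n⌋₊ / 2) := by
        rw [le_div_iff₀ (by positivity), mul_comm]
        exact hL.pow_mul_card_fewHubNbrs_floor_le hdbar hε hεd hD1 hsum hS3
    _ ≤ 1 / n * #(graphsWithDegreeSeq n D) := by
        rw [div_eq_mul_inv, mul_comm, one_div]
        gcongr
        · exact hL.natCast_pos hdbar hε
        · exact hL.natCast_le_ten_pow hdbar hε hεd
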